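/- arXiv:1104.1779 — 3 statements merged into one kernel-verified Lean document; each statement's English description precedes it below -/
import Mathlib

section
/- Consider the linear program min{ zᵀx : x_i ≤ x_j for all (i,j) ∈ I, −1 ≤ x_i ≤ 1 for all i } over x ∈ ℝⁿ, where I ⊆ {1,…,n}² is an arbitrary set of pairs and z ∈ ℝⁿ. Then there exists an optimal solution x* with x*_i ∈ {−1, +1} for all i. -/
open MeasureTheory intervalIntegral in
private lemma lp_step_integrable (a : ℝ) (b c : ℝ) :
    IntervalIntegrable (fun t => if a ≤ t then (-1 : ℝ) else 1) volume b c := by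
  apply Antitone.intervalIntegrable
  intro s t hst
  dsimp only
  by_cases hs : a ≤ s
  · rw [if_pos hs, if_pos (hs.trans hst)]
  · by_cases ht : a ≤ t
    · rw [if_neg hs, if_pos ht]; norm_num
    · rw [if_neg hs, if_neg ht]

open MeasureTheory intervalIntegral in
private lemma lp_step_integral (a : ℝ) (h1 : -1 ≤ a) (h2 : a ≤ 1) :
    ∫ t in (-1 : ℝ)..1, (if a ≤ t then (-1 : ℝ) else 1) = 2 * a := by
  rw [← integral_add_adjacent_intervals (b := a) (lp_step_integrable a _ _)
    (lp_step_integrable a _ _)]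
  have e1 : (∫ t in (-1 : ℝ)..a, (if a ≤ t then (-1 : ℝ) else 1)) =
      ∫ t in (-1 : ℝ)..a, (1 : ℝ) := by
    apply intervalIntegral.integral_congr_ae
    have hsing : ∀ᵐ t : ℝ, t ≠ a := by
      rw [MeasureTheory.ae_iff]
      convert Real.volume_singleton (a := a) using 2
      ext t; simp
    filter_upwards [hsing] with t ht hmem
    rw [Set.uIoc_of_le h1] at hmem
    rw [if_neg (not_le.2 (lt_of_le_of_ne hmem.2 ht))]
  have e2 : (∫ t in a..(1 : ℝ), (if a ≤ t then (-1 : ℝ) else 1)) =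
      ∫ t in a..(1 : ℝ), (-1 : ℝ) := by
    apply integral_congr
    intro t ht
    rw [Set.uIcc_of_le h2] at ht
    dsimp only
    rw [if_pos ht.1]
  rw [e1, e2, intervalIntegral.integral_const, intervalIntegral.integral_const]
  simp; ring

private lemma lp_key (n : ℕ) (z : Fin n → ℝ) (x' : Fin n → ℝ)
    (hbd : ∀ i, -1 ≤ x' i ∧ x' i ≤ 1) :
    ∃ t : ℝ, ∑ i, z i * (if x' i ≤ t then (-1 : ℝ) else 1) ≤ ∑ i, z i * x' i := by
  classical
  by_contra hcon
  push_neg at hcon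
  set g : ℝ → ℝ := fun t => ∑ i, z i * (if x' i ≤ t then (-1 : ℝ) else 1) with hg
  set c : ℝ := ∑ i, z i * x' i with hc
  have hint : ∀ b d : ℝ, IntervalIntegrable g MeasureTheory.volume b d := by
    intro b d
    have hge : g = ∑ i : Fin n, (fun t => z i * (if x' i ≤ t then (-1 : ℝ) else 1)) := by
      funext t
      rw [hg, Finset.sum_apply]
    rw [hge]
    exact IntervalIntegrable.sum _ (fun i _ => (lp_step_integrable (x' i) b d).const_mul (z i))
  have hI : ∫ t in (-1 : ℝ)..1, g t = 2 * c := by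
    rw [hg]
    rw [intervalIntegral.integral_finset_sum
      (fun i _ => (lp_step_integrable (x' i) (-1) 1).const_mul (z i))]
    rw [hc, Finset.mul_sum]
    apply Finset.sum_congr rfl
    intro i _
    rw [intervalIntegral.integral_const_mul, lp_step_integral (x' i) (hbd i).1 (hbd i).2]
    ring
  -- finite set of thresholds
  set F : Finset ℝ := insert (-1) (Finset.image x' Finset.univ) with hF
  have hFne : F.Nonempty := ⟨-1, Finset.mem_insert_self _ _⟩
  obtain ⟨t₁, ht₁F, ht₁min⟩ := F.exists_min_image g hFne
  have hmle : ∀ t ∈ Set.Icc (-1 : ℝ) 1, g t₁ ≤ g t := by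
    intro t ht
    set S : Finset ℝ := F.filter (fun s => s ≤ t) with hS
    have hSne : S.Nonempty := ⟨-1, by simp [hS, hF, ht.1]⟩
    obtain ⟨t₀, ht₀S⟩ := S.exists_max_image id hSne
    rw [hS, Finset.mem_filter] at ht₀S
    have hgt : g t = g t₀ := by
      apply Finset.sum_congr rfl
      intro i _
      congr 1
      by_cases h : x' i ≤ t
      · rw [if_pos h, if_pos]
        have : x' i ∈ S := by
          rw [hS, Finset.mem_filter]
          exact ⟨Finset.mem_insert_of_mem (Finset.mem_image_of_mem _ (Finset.mem_univ i)), h⟩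
        exact ht₀S.2 _ this
      · rw [if_neg h, if_neg]
        intro hle
        exact h (hle.trans ht₀S.1.2)
    rw [hgt]
    exact ht₁min t₀ ht₀S.1.1
  have hlt : c < g t₁ := hcon t₁
  have : (2 : ℝ) * g t₁ ≤ 2 * c := by
    calc (2 : ℝ) * g t₁ = ∫ _ in (-1 : ℝ)..1, g t₁ := by
          rw [intervalIntegral.integral_const, smul_eq_mul]; norm_num
      _ ≤ ∫ t in (-1 : ℝ)..1, g t := by
          apply intervalIntegral.integral_mono_on (by norm_num)
            intervalIntegrable_const (hint _ _) hmle
      _ = 2 * c := hI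
  linarith

theorem lp_has_pm_one_optimum (n : ℕ) (I : Set (Fin n × Fin n)) (z : Fin n → ℝ) :
    ∃ x : Fin n → ℝ,
      ((∀ p ∈ I, x p.1 ≤ x p.2) ∧ (∀ i, -1 ≤ x i ∧ x i ≤ 1)) ∧
      (∀ i, x i = -1 ∨ x i = 1) ∧
      (∀ x' : Fin n → ℝ,
        ((∀ p ∈ I, x' p.1 ≤ x' p.2) ∧ (∀ i, -1 ≤ x' i ∧ x' i ≤ 1)) →
        ∑ i, z i * x i ≤ ∑ i, z i * x' i) := by
  classical
  set S : Set (Fin n → ℝ) :=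
    {x | (∀ p ∈ I, x p.1 ≤ x p.2) ∧ (∀ i, x i = -1 ∨ x i = 1)} with hS
  have hfin : S.Finite := by
    apply Set.Finite.subset (Set.finite_range (fun b : Fin n → Bool =>
      fun i => if b i then (1 : ℝ) else -1))
    intro x hx
    refine ⟨fun i => if x i = 1 then true else false, ?_⟩
    funext i
    rcases hx.2 i with h | h <;> simp [h] <;> norm_num
  have hne : S.Nonempty := ⟨fun _ => 1, fun p _ => le_refl _, fun i => Or.inr rfl⟩
  obtain ⟨x, hxS, hxmin⟩ := Set.exists_min_image S (fun x => ∑ i, z i * x i) hfin hne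
  refine ⟨x, ⟨hxS.1, fun i => ?_⟩, hxS.2, ?_⟩
  · rcases hxS.2 i with h | h <;> rw [h] <;> norm_num
  · intro x' hx'
    obtain ⟨t, ht⟩ := lp_key n z x' hx'.2
    set s : Fin n → ℝ := fun i => if x' i ≤ t then (-1 : ℝ) else 1 with hs
    have hsS : s ∈ S := by
      constructor
      · intro p hp
        have := hx'.1 p hp
        by_cases h1 : x' p.1 ≤ t
        · simp only [hs]
          rw [if_pos h1]
          by_cases h2 : x' p.2 ≤ t
          · rw [if_pos h2]
          · rw [if_neg h2]; norm_num
        · simp only [hs]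
          rw [if_neg h1, if_neg (fun h2 => h1 (this.trans h2))]
      · intro i
        by_cases h : x' i ≤ t <;> simp [hs, h]
    exact le_trans (hxmin s hsS) ht
end

section
/- Let Φ : ℝ → ℝ be convex differentiable with derivative φ strictly increasing and surjective, and let y ∈ ℝⁿ and I ⊆ {1,…,n}². If ẑ* minimizes ∑_i (ẑ_i − y_i)² over {ẑ : ẑ_i ≤ ẑ_j for all (i,j) ∈ I}, then ŷ* defined by ŷ*_i = φ⁻¹(ẑ*_i) minimizes ∑_i (Φ(ŷ_i) − ŷ_i y_i) over {ŷ : ŷ_i ≤ ŷ_j for all (i,j) ∈ I}. -/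
private lemma bb_tangent (Φ : ℝ → ℝ) (hΦd : Differentiable ℝ Φ) (hmono : StrictMono (deriv Φ))
    (a b : ℝ) : Φ a + deriv Φ a * (b - a) ≤ Φ b := by
  rcases lt_trichotomy a b with h | h | h
  · obtain ⟨c, hc, hceq⟩ := exists_hasDerivAt_eq_slope Φ (deriv Φ) h
      (hΦd.continuous.continuousOn) (fun x _ => (hΦd x).hasDerivAt)
    have h1 : deriv Φ a ≤ deriv Φ c := (hmono.monotone hc.1.le)
    have h2 : deriv Φ c * (b - a) = Φ b - Φ a := by
      rw [hceq, div_mul_cancel₀]; exact (by intro hne; nlinarith [sub_eq_zero.mp hne])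
    nlinarith [mul_le_mul_of_nonneg_right h1 (by linarith : (0:ℝ) ≤ b - a)]
  · simp [h]
  · obtain ⟨c, hc, hceq⟩ := exists_hasDerivAt_eq_slope Φ (deriv Φ) h
      (hΦd.continuous.continuousOn) (fun x _ => (hΦd x).hasDerivAt)
    have h1 : deriv Φ c ≤ deriv Φ a := (hmono.monotone hc.2.le)
    have h2 : deriv Φ c * (a - b) = Φ a - Φ b := by
      rw [hceq, div_mul_cancel₀]; exact (by intro hne; nlinarith [sub_eq_zero.mp hne])
    nlinarith [mul_le_mul_of_nonneg_right h1 (by linarith : (0:ℝ) ≤ a - b)]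

private lemma bb_feasdir {n : ℕ} (y : Fin n → ℝ) (I : Set (Fin n × Fin n)) (zstar : Fin n → ℝ)
    (hzf : ∀ p ∈ I, zstar p.1 ≤ zstar p.2)
    (hzopt : ∀ zhat : Fin n → ℝ, (∀ p ∈ I, zhat p.1 ≤ zhat p.2) →
      ∑ i, (zstar i - y i) ^ 2 ≤ ∑ i, (zhat i - y i) ^ 2)
    (v : Fin n → ℝ) (hv : ∀ p ∈ I, zstar p.1 + v p.1 ≤ zstar p.2 + v p.2) :
    0 ≤ ∑ i, (zstar i - y i) * v i := by
  set A := ∑ i, (zstar i - y i) * v i with hA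
  set B := ∑ i, (v i) ^ 2 with hB
  have hB0 : 0 ≤ B := Finset.sum_nonneg fun i _ => sq_nonneg _
  by_contra hneg
  push_neg at hneg
  have hBpos : 0 < B := by
    rcases hB0.lt_or_eq with h | h
    · exact h
    · exfalso
      have hz : ∀ i ∈ Finset.univ, v i ^ 2 = 0 :=
        (Finset.sum_eq_zero_iff_of_nonneg (fun i _ => sq_nonneg _)).mp h.symm
      have : A = 0 := Finset.sum_eq_zero fun i _ => by
        have := pow_eq_zero_iff (n := 2) (by norm_num) |>.mp (hz i (Finset.mem_univ i))
        simp [this]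
      linarith
  set t : ℝ := min 1 (-A / B) with ht
  have ht0 : 0 < t := lt_min one_pos (div_pos (by linarith) hBpos)
  have ht1 : t ≤ 1 := min_le_left _ _
  have htA : t * B ≤ -A := by
    have : t ≤ -A / B := min_le_right _ _
    calc t * B ≤ (-A / B) * B := by nlinarith
    _ = -A := by field_simp
  have hfeas : ∀ p ∈ I, zstar p.1 + t * v p.1 ≤ zstar p.2 + t * v p.2 := by
    intro p hp
    have h1 := hzf p hp
    have h2 := hv p hp
    nlinarith
  have hle := hzopt (fun i => zstar i + t * v i) hfeas
  have hexp : ∑ i, (zstar i + t * v i - y i) ^ 2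
      = ∑ i, (zstar i - y i) ^ 2 + 2 * t * A + t ^ 2 * B := by
    rw [hA, hB, Finset.mul_sum, Finset.mul_sum, ← Finset.sum_add_distrib,
      ← Finset.sum_add_distrib]
    exact Finset.sum_congr rfl fun i _ => by ring
  rw [hexp] at hle
  nlinarith

theorem barlow_brunk_transform (n : ℕ) (Φ : ℝ → ℝ)
    (hΦc : ConvexOn ℝ Set.univ Φ) (hΦd : Differentiable ℝ Φ)
    (hmono : StrictMono (deriv Φ)) (g : ℝ → ℝ)
    (hgl : ∀ x : ℝ, g (deriv Φ x) = x) (hgr : ∀ x : ℝ, deriv Φ (g x) = x)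
    (y : Fin n → ℝ) (I : Set (Fin n × Fin n)) (zstar : Fin n → ℝ)
    (hzf : ∀ p ∈ I, zstar p.1 ≤ zstar p.2)
    (hzopt : ∀ zhat : Fin n → ℝ, (∀ p ∈ I, zhat p.1 ≤ zhat p.2) →
      ∑ i, (zstar i - y i) ^ 2 ≤ ∑ i, (zhat i - y i) ^ 2) :
    (∀ p ∈ I, g (zstar p.1) ≤ g (zstar p.2)) ∧
    (∀ yhat : Fin n → ℝ, (∀ p ∈ I, yhat p.1 ≤ yhat p.2) →
      ∑ i, (Φ (g (zstar i)) - g (zstar i) * y i) ≤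
        ∑ i, (Φ (yhat i) - yhat i * y i)) := by
  classical
  have hg : StrictMono g := by
    intro a b hab
    by_contra h
    push_neg at h
    have := hmono.monotone h
    rw [hgr, hgr] at this
    linarith
  set w : Fin n → ℝ := fun i => g (zstar i) with hw
  -- direction +w
  have hpos : 0 ≤ ∑ i, (zstar i - y i) * w i := by
    apply bb_feasdir y I zstar hzf hzopt
    intro p hp
    have h1 := hzf p hp
    have h2 := hg.monotone h1
    simp only [hw]
    linarith
  -- direction -ε w
  set c : Fin n × Fin n → ℝ := fun p =>
    if zstar p.1 < zstar p.2 then (zstar p.2 - zstar p.1) / (g (zstar p.2) - g (zstar p.1))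
    else 1 with hc
  set s : Finset ℝ := insert 1 (Finset.univ.image c) with hs
  have hsne : s.Nonempty := ⟨1, by simp [hs]⟩
  set ε : ℝ := s.min' hsne with hε
  have hcpos : ∀ p : Fin n × Fin n, 0 < c p := by
    intro p
    simp only [hc]
    split_ifs with h
    · exact div_pos (by linarith) (by have := hg h; linarith)
    · exact one_pos
  have hεpos : 0 < ε := by
    have hm : ε ∈ s := s.min'_mem hsne
    simp only [hs, Finset.mem_insert, Finset.mem_image] at hm
    rcases hm with h | ⟨p, _, hp⟩
    · rw [h]; exact one_pos
    · rw [← hp]; exact hcpos p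
  have hεle : ∀ p : Fin n × Fin n, ε ≤ c p := fun p =>
    Finset.min'_le s _ (by simp only [hs, Finset.mem_insert, Finset.mem_image]; exact Or.inr ⟨p, Finset.mem_univ p, rfl⟩)
  have hneg : 0 ≤ ∑ i, (zstar i - y i) * (-ε * w i) := by
    apply bb_feasdir y I zstar hzf hzopt
    intro p hp
    have h1 := hzf p hp
    rcases h1.lt_or_eq with h | h
    · have hce := hεle p
      have hgd : 0 < g (zstar p.2) - g (zstar p.1) := by have := hg h; linarith
      rw [hc] at hce
      simp only [if_pos h] at hce
      have : ε * (g (zstar p.2) - g (zstar p.1)) ≤ zstar p.2 - zstar p.1 := by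
        calc ε * (g (zstar p.2) - g (zstar p.1))
            ≤ ((zstar p.2 - zstar p.1) / (g (zstar p.2) - g (zstar p.1)))
              * (g (zstar p.2) - g (zstar p.1)) := by nlinarith
          _ = zstar p.2 - zstar p.1 := by field_simp
      simp only [hw]
      nlinarith
    · simp only [hw, h]
      linarith
  have hEzero : ∑ i, (zstar i - y i) * w i = 0 := by
    have : ∑ i, (zstar i - y i) * (-ε * w i) = -ε * ∑ i, (zstar i - y i) * w i := by
      rw [Finset.mul_sum]; exact Finset.sum_congr rfl fun i _ => by ring
    rw [this] at hneg
    nlinarith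
  refine ⟨fun p hp => hg.monotone (hzf p hp), ?_⟩
  intro yhat hyf
  have hyA : 0 ≤ ∑ i, (zstar i - y i) * yhat i := by
    apply bb_feasdir y I zstar hzf hzopt
    intro p hp
    have := hzf p hp
    have := hyf p hp
    linarith
  have key : ∀ i ∈ Finset.univ,
      Φ (w i) - w i * y i + (zstar i - y i) * (yhat i - w i)
        ≤ Φ (yhat i) - yhat i * y i := by
    intro i _
    have htan := bb_tangent Φ hΦd hmono (w i) (yhat i)
    have hd : deriv Φ (w i) = zstar i := hgr (zstar i)
    rw [hd] at htan
    nlinarith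
  have hsum := Finset.sum_le_sum key
  rw [Finset.sum_add_distrib] at hsum
  have hsplit : ∑ i, (zstar i - y i) * (yhat i - w i)
      = (∑ i, (zstar i - y i) * yhat i) - ∑ i, (zstar i - y i) * w i := by
    rw [← Finset.sum_sub_distrib]
    exact Finset.sum_congr rfl fun i _ => by ring
  rw [hsplit, hEzero] at hsum
  simp only [hw] at *
  linarith
end

section
/- Let S be a finite nonempty index set with strictly convex differentiable functions f_i each attaining a minimum on ℝ, and let w_S be the (unique) minimizer of z ↦ ∑_{i ∈ S} f_i(z). Suppose S is partitioned into nonempty V⁻ and V⁺ with ∑_{i ∈ V⁺} f_i'(w_S) ≤ 0 (equivalently ∑_{i ∈ V⁻} f_i'(w_S) ≥ 0). Then the weights satisfy w_{V⁻} ≤ w_S ≤ w_{V⁺}, where w_{V⁻} and w_{V⁺} are the unique minimizers of the restricted sums over V⁻ and V⁺. -/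
open Finset

private lemma sum_strictConvexOn {ι : Type*} (f : ι → ℝ → ℝ) (T : Finset ι)
    (hT : T.Nonempty) (h : ∀ i ∈ T, StrictConvexOn ℝ Set.univ (f i)) :
    StrictConvexOn ℝ Set.univ (fun z => ∑ i ∈ T, f i z) := by
  induction hT using Finset.Nonempty.cons_induction with
  | singleton i => simpa using h i (by simp)
  | cons i T hi hT ih =>
    simp only [Finset.sum_cons]
    exact (h i (by simp)).add (ih fun j hj => h j (by simp [hj]))

theorem cut_weights_ordered {ι : Type*} [DecidableEq ι] (S Vm Vp : Finset ι)
    (hVm : Vm.Nonempty) (hVp : Vp.Nonempty)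
    (hunion : Vm ∪ Vp = S) (hdisj : Disjoint Vm Vp)
    (f : ι → ℝ → ℝ)
    (hconv : ∀ i ∈ S, StrictConvexOn ℝ Set.univ (f i))
    (hdiff : ∀ i ∈ S, Differentiable ℝ (f i))
    (hattain : ∀ i ∈ S, ∃ t : ℝ, ∀ z : ℝ, f i t ≤ f i z)
    (wS wm wp : ℝ)
    (hwS : ∀ z : ℝ, ∑ i ∈ S, f i wS ≤ ∑ i ∈ S, f i z)
    (hwm : ∀ z : ℝ, ∑ i ∈ Vm, f i wm ≤ ∑ i ∈ Vm, f i z)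
    (hwp : ∀ z : ℝ, ∑ i ∈ Vp, f i wp ≤ ∑ i ∈ Vp, f i z)
    (hcut : ∑ i ∈ Vp, deriv (f i) wS ≤ 0) :
    wm ≤ wS ∧ wS ≤ wp := by
  have hmS : Vm ⊆ S := hunion ▸ Finset.subset_union_left
  have hpS : Vp ⊆ S := hunion ▸ Finset.subset_union_right
  -- derivative of a finset-sum
  have hderiv : ∀ (T : Finset ι), T ⊆ S → ∀ x : ℝ,
      deriv (fun z => ∑ i ∈ T, f i z) x = ∑ i ∈ T, deriv (f i) x := by
    intro T hTS x
    exact deriv_fun_sum fun i hi => (hdiff i (hTS hi)).differentiableAt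
  -- minimizers have zero derivative
  have hzero : ∀ (T : Finset ι), T ⊆ S → ∀ w : ℝ,
      (∀ z : ℝ, ∑ i ∈ T, f i w ≤ ∑ i ∈ T, f i z) →
      ∑ i ∈ T, deriv (f i) w = 0 := by
    intro T hTS w hw
    have hloc : IsLocalMin (fun z => ∑ i ∈ T, f i z) w :=
      (isMinOn_iff.mpr fun z _ => hw z).isLocalMin Filter.univ_mem
    have := hloc.deriv_eq_zero
    rwa [hderiv T hTS w] at this
  have hSzero := hzero S (le_refl _) wS hwS
  have hmzero := hzero Vm hmS wm hwm
  have hpzero := hzero Vp hpS wp hwp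
  -- split the total derivative at wS
  have hsplit : ∑ i ∈ Vm, deriv (f i) wS + ∑ i ∈ Vp, deriv (f i) wS = 0 := by
    rw [← Finset.sum_union hdisj, hunion, hSzero]
  have hmcut : 0 ≤ ∑ i ∈ Vm, deriv (f i) wS := by linarith
  -- strict monotonicity of derivatives of the restricted sums
  have key : ∀ (T : Finset ι), T ⊆ S → T.Nonempty → ∀ a b : ℝ, a < b →
      ∑ i ∈ T, deriv (f i) a < ∑ i ∈ T, deriv (f i) b := by
    intro T hTS hTne a b hab
    have hsc := sum_strictConvexOn f T hTne fun i hi => hconv i (hTS hi)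
    have := hsc.strictMonoOn_deriv
      (fun x _ => (Differentiable.fun_sum fun i hi => hdiff i (hTS hi)).differentiableAt)
      (Set.mem_univ a) (Set.mem_univ b) hab
    rwa [hderiv T hTS a, hderiv T hTS b] at this
  constructor
  · by_contra h
    push_neg at h
    have := key Vm hmS hVm wS wm h
    rw [hmzero] at this
    linarith
  · by_contra h
    push_neg at h
    have := key Vp hpS hVp wp wS h
    rw [hpzero] at this
    linarith
end
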